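/- Let A ∈ ℝ^{m×N} with rank(A) = m, y ∈ ℝ^m, p ≥ 2 and α > 0, and let ψ_α(t) be the state of the gradient flow. Then for all t ∈ [0,∞), ‖Aψ_α(t) − y‖₂ ≤ ‖y‖₂ exp(−Ct), where C = 2p²σ_min(A)²α^{2p−2}. In particular Aψ_α(t) → y as t → ∞. -/

import Mathlib

noncomputable section

/-- The Euclidean (ℓ²) norm of a vector in ℝⁿ. -/
def norm2 {n : ℕ} (v : Fin n → ℝ) : ℝ := Real.sqrt (∑ i, v i ^ 2)

/-- The ℓ¹ norm of a vector in ℝⁿ. -/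
def norm1 {n : ℕ} (v : Fin n → ℝ) : ℝ := ∑ i, |v i|

/-- The sup (ℓ^∞) norm of a vector in ℝⁿ. -/
def normInf {n : ℕ} (v : Fin n → ℝ) : ℝ := ⨆ i, |v i|

/-- The ℓʳ (quasi-)norm ‖v‖_r = (∑ |v i|^r)^(1/r). -/
def normr {n : ℕ} (r : ℝ) (v : Fin n → ℝ) : ℝ := (∑ i, |v i| ^ r) ^ (1 / r)

/-- The smallest singular value of `A`, via `σ_min(A) = inf {‖Aᵀ z‖₂ : ‖z‖₂ = 1}`. -/
def sigmaMin {m N : ℕ} (A : Matrix (Fin m) (Fin N) ℝ) : ℝ :=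
  sInf {c : ℝ | ∃ z : Fin m → ℝ, norm2 z = 1 ∧ c = norm2 (A.transpose.mulVec z)}

/-- The entropy H(z) = −∑ |z i| ln |z i| (with the convention 0 · ln 0 = 0,
which holds automatically since `Real.log 0 = 0`). -/
def Hent {n : ℕ} (z : Fin n → ℝ) : ℝ := -∑ i, |z i| * Real.log |z i|

/-- The set 𝒰(A,y) of basis-pursuit minimizers: minimizers of ‖·‖₁ subject to Az = y. -/
def BPset {m N : ℕ} (A : Matrix (Fin m) (Fin N) ℝ) (y : Fin m → ℝ) : Set (Fin N → ℝ) :=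
  {z | A.mulVec z = y ∧ ∀ w : Fin N → ℝ, A.mulVec w = y → norm1 z ≤ norm1 w}

/-- The basis-pursuit minimum value R(A,y) = min {‖z‖₁ : Az = y}. -/
def Rmin {m N : ℕ} (A : Matrix (Fin m) (Fin N) ℝ) (y : Fin m → ℝ) : ℝ :=
  sInf (norm1 '' {z : Fin N → ℝ | A.mulVec z = y})

/-- The function h_p: h₂(t) = 2 sinh t, and for p > 2,
h_p(t) = (1−t)^{−p/(p−2)} − (1+t)^{−p/(p−2)}. -/
def hfun (p t : ℝ) : ℝ :=
  if p = 2 then 2 * Real.sinh t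
  else (1 - t) ^ (-(p / (p - 2))) - (1 + t) ^ (-(p / (p - 2)))

/-- The natural domain of h_p: all of ℝ when p = 2, and (−1,1) when p > 2. -/
def hDomain (p : ℝ) : Set ℝ := if p = 2 then Set.univ else Set.Ioo (-1) 1

/-- The inverse h_p^{-1} : ℝ → ℝ of h_p (h_p is a strictly increasing bijection
from its domain onto ℝ). -/
def hInv (p u : ℝ) : ℝ := Function.invFunOn (hfun p) (hDomain p) u

/-- q_p(u) = ∫₀ᵘ h_p^{−1}(v) dv. -/
def qfun (p u : ℝ) : ℝ := ∫ v in (0:ℝ)..u, hInv p v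

/-- Q_p(z) = α^p ∑ q_p(z i / α^p). -/
def Qfun {n : ℕ} (p α : ℝ) (z : Fin n → ℝ) : ℝ := α ^ p * ∑ i, qfun p (z i / α ^ p)

/-- g_p: g₂(u) = |u| ln(|u|/e) (with g₂(0) = 0), and for p > 2,
g_p(u) = |u| − (p/2)|u|^{2/p}. -/
def gfun (p u : ℝ) : ℝ :=
  if p = 2 then (if u = 0 then 0 else |u| * Real.log (|u| / Real.exp 1))
  else |u| - p / 2 * |u| ^ (2 / p)

/-- G_p(z) = α^p ∑ g_p(z i / α^p). -/
def Gfun {n : ℕ} (p α : ℝ) (z : Fin n → ℝ) : ℝ := α ^ p * ∑ i, gfun p (z i / α ^ p)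

/-- The predictor ψ_θ = θ₊^p − θ₋^p (componentwise powers), for a parameter vector
θ = (θ₊, θ₋) ∈ ℝ^{2N}. -/
def psiOf {N : ℕ} (p : ℝ) (θ : EuclideanSpace ℝ (Fin N ⊕ Fin N)) : Fin N → ℝ :=
  fun i => θ (Sum.inl i) ^ p - θ (Sum.inr i) ^ p

/-- The squared loss L(θ) = (1/2)‖A ψ_θ − y‖₂². -/
def lossFun {m N : ℕ} (A : Matrix (Fin m) (Fin N) ℝ) (y : Fin m → ℝ) (p : ℝ)
    (θ : EuclideanSpace ℝ (Fin N ⊕ Fin N)) : ℝ :=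
  (1 / 2) * ∑ j, (A.mulVec (psiOf p θ) j - y j) ^ 2

end

/-!
Along the flow, `θ₊ᵢ' = -p θ₊ᵢ^(p-1) gᵢ` and `θ₋ᵢ' = p θ₋ᵢ^(p-1) gᵢ` with `g = Aᵀ r`,
`r = Aψ - y`, so `θ₊ᵢ θ₋ᵢ` (for `p = 2`) or `θ₊ᵢ^(2-p) + θ₋ᵢ^(2-p)` (for `p > 2`) is
conserved. Starting from equal values `α`, AM-GM turns this into `θ₊ᵢ θ₋ᵢ ≥ α²` and then
`θ₊ᵢ^(2p-2) + θ₋ᵢ^(2p-2) ≥ 2 α^(2p-2)`. Hence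
`L' = -‖∇L‖² = -p² ∑ gᵢ² (θ₊ᵢ^(2p-2) + θ₋ᵢ^(2p-2)) ≤ -2p² α^(2p-2) ‖Aᵀ r‖² ≤ -2C L`, using
`‖Aᵀ r‖ ≥ σ_min(A) ‖r‖`, and Grönwall gives `‖r(t)‖² = 2 L(t) ≤ ‖y‖² e^(-2Ct)`. For `p > 2` the
conservation law needs positive coordinates; a continuity argument shows they never leave
`(0, ∞)`.
-/

open Set Filter Topology Matrix

section Norm2

variable {n : ℕ}

lemma norm2_eq_norm (v : Fin n → ℝ) :
    norm2 v = ‖(WithLp.toLp 2 v : EuclideanSpace ℝ (Fin n))‖ := by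
  simp [norm2, EuclideanSpace.norm_eq]

lemma norm2_nonneg (v : Fin n → ℝ) : 0 ≤ norm2 v := Real.sqrt_nonneg _

lemma norm2_smul (c : ℝ) (v : Fin n → ℝ) : norm2 (c • v) = |c| * norm2 v := by
  rw [norm2_eq_norm, WithLp.toLp_smul, norm_smul, ← norm2_eq_norm, Real.norm_eq_abs]

lemma norm2_neg (v : Fin n → ℝ) : norm2 (-v) = norm2 v := by
  rw [norm2_eq_norm, WithLp.toLp_neg, norm_neg, ← norm2_eq_norm]

lemma sq_norm2 (v : Fin n → ℝ) : norm2 v ^ 2 = ∑ i, v i ^ 2 :=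
  Real.sq_sqrt (by positivity)

lemma abs_le_norm2 (v : Fin n → ℝ) (i : Fin n) : |v i| ≤ norm2 v := by
  rw [← Real.sqrt_sq_eq_abs]
  exact Real.sqrt_le_sqrt (Finset.single_le_sum (fun j _ => sq_nonneg (v j)) (Finset.mem_univ i))

lemma tendsto_of_norm2_sub_le_exp {u : ℝ → Fin n → ℝ} {y : Fin n → ℝ} {K C : ℝ} (hC : 0 < C)
    (h : ∀ t, 0 ≤ t → norm2 (u t - y) ≤ K * Real.exp (-C * t)) :
    Tendsto u atTop (𝓝 y) := by
  have hexp : Tendsto (fun t => K * Real.exp (-C * t)) atTop (𝓝 0) := by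
    simpa [neg_mul] using (Real.tendsto_exp_neg_atTop_nhds_zero.comp
      (tendsto_id.const_mul_atTop hC)).const_mul K
  refine tendsto_pi_nhds.2 fun j => tendsto_sub_nhds_zero_iff.1 ?_
  refine squeeze_zero_norm' (eventually_atTop.2 ⟨0, fun t ht => ?_⟩) hexp
  exact (abs_le_norm2 (u t - y) j).trans (h t ht)

end Norm2

section SigmaMin

variable {m N : ℕ} (A : Matrix (Fin m) (Fin N) ℝ)

lemma sigmaMin_nonneg : 0 ≤ sigmaMin A :=
  Real.sInf_nonneg fun _ ⟨_, _, hc⟩ => hc ▸ norm2_nonneg _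

lemma sigmaMin_mul_norm2_le (z : Fin m → ℝ) : sigmaMin A * norm2 z ≤ norm2 (Aᵀ *ᵥ z) := by
  rcases (norm2_nonneg z).eq_or_lt with hz | hz
  · rw [← hz, mul_zero]
    exact norm2_nonneg _
  have hunit : norm2 ((norm2 z)⁻¹ • z) = 1 := by
    rw [norm2_smul, abs_inv, abs_of_pos hz, inv_mul_cancel₀ hz.ne']
  have hle : sigmaMin A ≤ norm2 (Aᵀ *ᵥ ((norm2 z)⁻¹ • z)) :=
    csInf_le ⟨0, fun _ ⟨_, _, hc⟩ => hc ▸ norm2_nonneg _⟩ ⟨_, hunit, rfl⟩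
  rwa [mulVec_smul, norm2_smul, abs_inv, abs_of_pos hz, inv_mul_eq_div, le_div_iff₀ hz] at hle

lemma injective_transpose_mulVec (hA : A.rank = m) : Function.Injective Aᵀ.mulVec := by
  have h := Aᵀ.mulVecLin.finrank_range_add_finrank_ker
  rw [← Matrix.rank, Matrix.rank_transpose, hA, Module.finrank_fin_fun] at h
  have hker : LinearMap.ker Aᵀ.mulVecLin = ⊥ := Submodule.finrank_eq_zero.1 (by omega)
  exact LinearMap.ker_eq_bot.1 hker

lemma sigmaMin_pos (hm : 0 < m) (hA : A.rank = m) : 0 < sigmaMin A := by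
  set f := toLpLin 2 2 Aᵀ
  have hf : Function.Injective f := fun u v huv => by
    simp only [f, toLpLin_apply] at huv
    exact WithLp.ofLp_injective _ (injective_transpose_mulVec A hA (WithLp.toLp_injective _ huv))
  obtain ⟨K, hK, hKf⟩ := f.exists_antilipschitzWith (LinearMap.ker_eq_bot.2 hf)
  have hbound : ∀ c ∈ {c : ℝ | ∃ z : Fin m → ℝ, norm2 z = 1 ∧ c = norm2 (Aᵀ *ᵥ z)},
      (K : ℝ)⁻¹ ≤ c := by
    rintro c ⟨z, hz, rfl⟩
    have := ZeroHomClass.bound_of_antilipschitz f hKf (WithLp.toLp 2 z)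
    rw [← norm2_eq_norm, hz, toLpLin_apply, ← norm2_eq_norm] at this
    rwa [inv_le_iff_one_le_mul₀' (by positivity)]
  have hunit : norm2 (Pi.single (⟨0, hm⟩ : Fin m) (1 : ℝ)) = 1 := by
    simp [norm2_eq_norm]
  exact (inv_pos.2 (NNReal.coe_pos.2 hK)).trans_le (le_csInf ⟨_, _, hunit, rfl⟩ hbound)

end SigmaMin

section RealInequalities

variable {q α β a b : ℝ}

lemma sq_le_mul_of_rpow_add_rpow_eq (hq : q < 0) (hα : 0 < α) (ha : 0 < a) (hb : 0 < b)
    (h : a ^ q + b ^ q = 2 * α ^ q) : α ^ 2 ≤ a * b := by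
  have hsq : (α ^ 2) ^ q = (α ^ q) ^ 2 := by
    rw [← Real.rpow_natCast, ← Real.rpow_natCast, ← Real.rpow_mul hα.le, ← Real.rpow_mul hα.le,
      mul_comm]
  have hamgm : (a * b) ^ q ≤ (α ^ 2) ^ q := by
    rw [Real.mul_rpow ha.le hb.le, hsq, show α ^ q = (a ^ q + b ^ q) / 2 by linarith]
    nlinarith [sq_nonneg (a ^ q - b ^ q)]
  exact (Real.rpow_le_rpow_iff_of_neg (by positivity) (by positivity) hq).1 hamgm

lemma lt_of_rpow_add_rpow_eq (hq : q < 0) (hβ : 0 < β) (ha : 0 < a) (hb : 0 < b)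
    (h : a ^ q + b ^ q = β ^ q) : β < a := by
  rw [← Real.rpow_lt_rpow_iff_of_neg ha hβ hq]
  linarith [Real.rpow_pos_of_pos hb q]

lemma two_mul_rpow_le_of_sq_le_mul {p : ℝ} (hp : 1 ≤ p) (hα : 0 ≤ α) (ha : 0 ≤ a) (hb : 0 ≤ b)
    (hab : α ^ 2 ≤ a * b) : 2 * α ^ (2 * p - 2) ≤ (a ^ (p - 1)) ^ 2 + (b ^ (p - 1)) ^ 2 := by
  have hpow : α ^ (2 * p - 2) = (α ^ 2) ^ (p - 1) := by
    rw [← Real.rpow_natCast, ← Real.rpow_mul hα]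
    push_cast
    ring_nf
  have hmono : (α ^ 2) ^ (p - 1) ≤ a ^ (p - 1) * b ^ (p - 1) := by
    rw [← Real.mul_rpow ha hb]
    exact Real.rpow_le_rpow (by positivity) hab (by linarith)
  rw [hpow]
  nlinarith [sq_nonneg (a ^ (p - 1) - b ^ (p - 1))]

end RealInequalities

section RightDerivatives

lemma le_mul_exp_of_hasDerivWithinAt_le {f f' : ℝ → ℝ} {c : ℝ}
    (hf : ∀ t, 0 ≤ t → HasDerivWithinAt f (f' t) (Ici 0) t)
    (hf' : ∀ t, 0 ≤ t → f' t ≤ -c * f t) {t : ℝ} (ht : 0 ≤ t) :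
    f t ≤ f 0 * Real.exp (-c * t) := by
  have hexp (s : ℝ) : HasDerivAt (fun s => Real.exp (c * s)) (Real.exp (c * s) * c) s := by
    simpa using ((hasDerivAt_id s).const_mul c).exp
  have hF : ∀ s ∈ Icc 0 t, f s * Real.exp (c * s) ≤ f 0 * Real.exp (c * 0) := by
    refine image_le_of_deriv_right_le_deriv_boundary
      (f' := fun s => f' s * Real.exp (c * s) + f s * (Real.exp (c * s) * c)) (B' := 0)
      (fun s hs => ((hf s hs.1).continuousWithinAt.mono fun _ h => h.1).mul
        (hexp s).continuousAt.continuousWithinAt)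
      (fun s hs => ((hf s hs.1).mono (Ici_subset_Ici.2 hs.1)).mul (hexp s).hasDerivWithinAt)
      le_rfl continuousOn_const (fun s _ => hasDerivWithinAt_const _ _ _) fun s hs => ?_
    have := mul_le_mul_of_nonneg_right (hf' s hs.1) (Real.exp_pos (c * s)).le
    simp only [Pi.zero_apply]
    linarith
  have := hF t ⟨ht, le_rfl⟩
  rwa [mul_zero, Real.exp_zero, mul_one, ← le_div_iff₀ (Real.exp_pos _), div_eq_mul_inv,
    ← Real.exp_neg, ← neg_mul] at this

lemma lt_of_barrier {ι : Type*} [Finite ι] {u : ℝ → ι → ℝ} {β : ℝ}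
    (hu : ∀ k, ContinuousOn (fun t => u t k) (Ici 0)) (h0 : ∀ k, β ≤ u 0 k)
    (hstep : ∀ T, 0 ≤ T → (∀ s ∈ Icc 0 T, ∀ k, β ≤ u s k) → ∀ k, β < u T k)
    {t : ℝ} (ht : 0 ≤ t) (k : ι) : β < u t k := by
  by_contra! htk
  set B := {s : ℝ | 0 ≤ s ∧ ∃ k, u s k ≤ β}
  have hB : IsClosed B := by
    have : B = ⋃ k, Ici 0 ∩ (fun s => u s k) ⁻¹' Iic β := by ext; simp [B]
    rw [this]
    exact isClosed_iUnion_of_finite fun k =>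
      (hu k).preimage_isClosed_of_isClosed isClosed_Ici isClosed_Iic
  have hBbdd : BddBelow B := ⟨0, fun s hs => hs.1⟩
  obtain ⟨hT, l, hl⟩ := hB.csInf_mem ⟨t, ht, k, htk⟩ hBbdd
  set T := sInf B
  have hbelow : ∀ s, 0 ≤ s → s < T → ∀ k, β < u s k := fun s hs hsT k => by
    by_contra! h
    exact (csInf_le hBbdd ⟨hs, k, h⟩).not_gt hsT
  refine (hstep T hT (fun s hs k => ?_) l).not_ge hl
  rcases hs.2.lt_or_eq with hsT | rfl
  · exact (hbelow s hs.1 hsT k).le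
  rcases hs.1.eq_or_lt with hs0 | hpos
  · exact hs0 ▸ h0 k
  -- `β ≤ u · k` on `[0, T)`, hence on its closure `[0, T]`
  have hcl := (hu k).preimage_isClosed_of_isClosed isClosed_Ici (isClosed_Ici (a := β))
  refine (hcl.closure_subset_iff.2 (fun r (hr : r ∈ Ico 0 T) =>
    ⟨hr.1, (hbelow r hr.1 hr.2 k).le⟩) ?_).2
  rw [closure_Ico hpos.ne]
  exact ⟨hs.1, le_rfl⟩

variable {a b g : ℝ → ℝ}

lemma mul_eq_of_hasDerivWithinAt {c : ℝ}
    (ha : ∀ t, 0 ≤ t → HasDerivWithinAt a (-(c * a t * g t)) (Ici 0) t)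
    (hb : ∀ t, 0 ≤ t → HasDerivWithinAt b (c * b t * g t) (Ici 0) t) {t : ℝ} (ht : 0 ≤ t) :
    a t * b t = a 0 * b 0 := by
  have hF (s : ℝ) (hs : 0 ≤ s) : HasDerivWithinAt (fun s => a s * b s) 0 (Ici 0) s :=
    ((ha s hs).mul (hb s hs)).congr_deriv (by ring)
  exact constant_of_has_deriv_right_zero
    (fun s hs => (hF s hs.1).continuousWithinAt.mono fun _ h => h.1)
    (fun s hs => (hF s hs.1).mono (Ici_subset_Ici.2 hs.1)) t ⟨ht, le_rfl⟩

lemma rpow_add_rpow_eq_of_hasDerivWithinAt {p : ℝ}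
    (ha : ∀ t, 0 ≤ t → HasDerivWithinAt a (-(p * a t ^ (p - 1) * g t)) (Ici 0) t)
    (hb : ∀ t, 0 ≤ t → HasDerivWithinAt b (p * b t ^ (p - 1) * g t) (Ici 0) t)
    {T : ℝ} (hpos : ∀ s ∈ Icc 0 T, 0 < a s ∧ 0 < b s) {t : ℝ} (ht : t ∈ Icc 0 T) :
    a t ^ (2 - p) + b t ^ (2 - p) = a 0 ^ (2 - p) + b 0 ^ (2 - p) := by
  have hF (s : ℝ) (hs : s ∈ Icc 0 T) :
      HasDerivWithinAt (fun s => a s ^ (2 - p) + b s ^ (2 - p)) 0 (Ici 0) s := by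
    obtain ⟨has, hbs⟩ := hpos s hs
    refine (((ha s hs.1).rpow_const (Or.inl has.ne')).add
      ((hb s hs.1).rpow_const (Or.inl hbs.ne'))).congr_deriv ?_
    have hinv {x : ℝ} (hx : 0 < x) : x ^ (p - 1) * x ^ (2 - p - 1) = 1 := by
      rw [← Real.rpow_add hx, show p - 1 + (2 - p - 1) = 0 by ring, Real.rpow_zero]
    linear_combination (-(p * g s * (2 - p))) * hinv has + p * g s * (2 - p) * hinv hbs
  exact constant_of_has_deriv_right_zero
    (fun s hs => (hF s hs).continuousWithinAt.mono fun _ h => h.1)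
    (fun s hs => (hF s (Ico_subset_Icc_self hs)).mono (Ici_subset_Ici.2 hs.1)) t ht

end RightDerivatives

noncomputable section Gradient

variable {m N : ℕ} (A : Matrix (Fin m) (Fin N) ℝ) (y : Fin m → ℝ) (p : ℝ)

def lossResidual (x : EuclideanSpace ℝ (Fin N ⊕ Fin N)) : Fin m → ℝ := A *ᵥ psiOf p x - y

def lossGrad (x : EuclideanSpace ℝ (Fin N ⊕ Fin N)) : EuclideanSpace ℝ (Fin N ⊕ Fin N) :=
  WithLp.toLp 2 <| Sum.elim
    (fun i => p * x (.inl i) ^ (p - 1) * (Aᵀ *ᵥ lossResidual A y p x) i)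
    (fun i => -(p * x (.inr i) ^ (p - 1) * (Aᵀ *ᵥ lossResidual A y p x) i))

lemma lossFun_eq_norm2_sq (x : EuclideanSpace ℝ (Fin N ⊕ Fin N)) :
    lossFun A y p x = norm2 (lossResidual A y p x) ^ 2 / 2 := by
  rw [sq_norm2, lossFun]
  simp only [lossResidual, Pi.sub_apply]
  ring

lemma hasGradientAt_lossFun (hp : 1 ≤ p) (x : EuclideanSpace ℝ (Fin N ⊕ Fin N)) :
    HasGradientAt (lossFun A y p) (lossGrad A y p x) x := by
  have hpow (k : Fin N ⊕ Fin N) :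
      HasFDerivAt (fun z : EuclideanSpace ℝ (Fin N ⊕ Fin N) => z k ^ p)
        ((p * x k ^ (p - 1)) • EuclideanSpace.proj (𝕜 := ℝ) k) x :=
    (Real.hasDerivAt_rpow_const (Or.inr hp)).comp_hasFDerivAt x
      (EuclideanSpace.proj (𝕜 := ℝ) k).hasFDerivAt
  have hres (j : Fin m) : HasFDerivAt (fun z => lossResidual A y p z j)
      (∑ i, A j i • ((p * x (.inl i) ^ (p - 1)) • EuclideanSpace.proj (𝕜 := ℝ) (.inl i) -
        (p * x (.inr i) ^ (p - 1)) • EuclideanSpace.proj (𝕜 := ℝ) (.inr i))) x := by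
    change HasFDerivAt (fun z => ∑ i, A j i * (z (.inl i) ^ p - z (.inr i) ^ p) - y j) _ x
    exact (HasFDerivAt.fun_sum (u := Finset.univ) fun i _ =>
      ((hpow (.inl i)).sub (hpow (.inr i))).const_mul (A j i)).sub_const (y j)
  rw [hasGradientAt_iff_hasFDerivAt]
  change HasFDerivAt (fun z => 1 / 2 * ∑ j, lossResidual A y p z j ^ 2) _ x
  refine ((HasFDerivAt.fun_sum (u := Finset.univ) fun j _ => (hres j).pow 2).const_mul
    (1 / 2 : ℝ)).congr_fderiv (ContinuousLinearMap.ext fun v => ?_)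
  simp only [one_div, Nat.add_one_sub_one, pow_one, nsmul_eq_mul, Nat.cast_ofNat,
    _root_.smul_apply, _root_.sum_apply, _root_.sub_apply, PiLp.proj_apply, smul_eq_mul,
    lossGrad, mulVec, dotProduct, transpose_apply, InnerProductSpace.toDual_apply_apply,
    PiLp.inner_apply, RCLike.inner_apply, Real.ringHom_apply, Fintype.sum_sum_type,
    Sum.elim_inl, Sum.elim_inr, Finset.mul_sum, ← Finset.sum_neg_distrib,
    ← Finset.sum_add_distrib]
  rw [Finset.sum_comm]
  refine Finset.sum_congr rfl fun i _ => Finset.sum_congr rfl fun j _ => ?_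
  ring

lemma norm_lossGrad_sq (x : EuclideanSpace ℝ (Fin N ⊕ Fin N)) :
    ‖lossGrad A y p x‖ ^ 2 = ∑ i, p ^ 2 * (Aᵀ *ᵥ lossResidual A y p x) i ^ 2 *
      ((x (.inl i) ^ (p - 1)) ^ 2 + (x (.inr i) ^ (p - 1)) ^ 2) := by
  rw [EuclideanSpace.norm_sq_eq, Fintype.sum_sum_type, ← Finset.sum_add_distrib]
  refine Finset.sum_congr rfl fun i _ => ?_
  simp only [lossGrad, Real.norm_eq_abs, sq_abs, Sum.elim_inl, Sum.elim_inr]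
  ring

lemma mul_lossFun_le_norm_lossGrad_sq {κ : ℝ} (hκ : 0 ≤ κ)
    (x : EuclideanSpace ℝ (Fin N ⊕ Fin N))
    (hx : ∀ i, 2 * κ ≤ (x (.inl i) ^ (p - 1)) ^ 2 + (x (.inr i) ^ (p - 1)) ^ 2) :
    2 * (2 * p ^ 2 * sigmaMin A ^ 2 * κ) * lossFun A y p x ≤ ‖lossGrad A y p x‖ ^ 2 := by
  set g := Aᵀ *ᵥ lossResidual A y p x
  have hσ : sigmaMin A ^ 2 * norm2 (lossResidual A y p x) ^ 2 ≤ norm2 g ^ 2 := by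
    rw [← mul_pow]
    exact pow_le_pow_left₀ (mul_nonneg (sigmaMin_nonneg A) (norm2_nonneg _))
      (sigmaMin_mul_norm2_le A _) 2
  calc 2 * (2 * p ^ 2 * sigmaMin A ^ 2 * κ) * lossFun A y p x
      = 2 * p ^ 2 * κ * (sigmaMin A ^ 2 * norm2 (lossResidual A y p x) ^ 2) := by
        rw [lossFun_eq_norm2_sq]; ring
    _ ≤ 2 * p ^ 2 * κ * norm2 g ^ 2 := by gcongr
    _ = ∑ i, p ^ 2 * g i ^ 2 * (2 * κ) := by
        rw [sq_norm2, Finset.mul_sum]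
        exact Finset.sum_congr rfl fun i _ => by ring
    _ ≤ ‖lossGrad A y p x‖ ^ 2 := by
        rw [norm_lossGrad_sq]
        exact Finset.sum_le_sum fun i _ => by gcongr; exact hx i

end Gradient

section GradientFlow

variable {m N : ℕ} {A : Matrix (Fin m) (Fin N) ℝ} {y : Fin m → ℝ} {p α : ℝ}
  {θ : ℝ → EuclideanSpace ℝ (Fin N ⊕ Fin N)}
  (hflow : ∀ t, 0 ≤ t → HasDerivWithinAt θ (-lossGrad A y p (θ t)) (Ici 0) t)
include hflow

lemma hasDerivWithinAt_inl_of_flow {t : ℝ} (ht : 0 ≤ t) (i : Fin N) :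
    HasDerivWithinAt (fun s => θ s (.inl i))
      (-(p * θ t (.inl i) ^ (p - 1) * (Aᵀ *ᵥ lossResidual A y p (θ t)) i)) (Ici 0) t :=
  (EuclideanSpace.proj (𝕜 := ℝ) (ι := Fin N ⊕ Fin N) (.inl i)).hasFDerivAt.comp_hasDerivWithinAt
    t (hflow t ht)

lemma hasDerivWithinAt_inr_of_flow {t : ℝ} (ht : 0 ≤ t) (i : Fin N) :
    HasDerivWithinAt (fun s => θ s (.inr i))
      (p * θ t (.inr i) ^ (p - 1) * (Aᵀ *ᵥ lossResidual A y p (θ t)) i) (Ici 0) t :=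
  ((EuclideanSpace.proj (𝕜 := ℝ) (ι := Fin N ⊕ Fin N) (.inr i)).hasFDerivAt.comp_hasDerivWithinAt
    t (hflow t ht)).congr_deriv (by simp [lossGrad])

lemma two_mul_rpow_le_of_flow_of_eq_two (hp : p = 2) (hθ0 : ∀ k, θ 0 k = α) {t : ℝ}
    (ht : 0 ≤ t) (i : Fin N) :
    2 * α ^ (2 * p - 2) ≤ (θ t (.inl i) ^ (p - 1)) ^ 2 + (θ t (.inr i) ^ (p - 1)) ^ 2 := by
  subst hp
  have h21 : (2 : ℝ) - 1 = 1 := by norm_num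
  have hprod : θ t (.inl i) * θ t (.inr i) = θ 0 (.inl i) * θ 0 (.inr i) := by
    refine mul_eq_of_hasDerivWithinAt (a := fun s => θ s (.inl i)) (b := fun s => θ s (.inr i))
      (g := fun s => (Aᵀ *ᵥ lossResidual A y 2 (θ s)) i) (c := 2)
      (fun s hs => ?_) (fun s hs => ?_) ht
    · simpa [h21] using hasDerivWithinAt_inl_of_flow hflow hs i
    · simpa [h21] using hasDerivWithinAt_inr_of_flow hflow hs i
  rw [hθ0, hθ0] at hprod
  rw [h21, Real.rpow_one, Real.rpow_one, show (2 : ℝ) * 2 - 2 = 2 by norm_num, Real.rpow_two]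
  nlinarith [sq_nonneg (θ t (.inl i) - θ t (.inr i))]

lemma two_mul_rpow_le_of_flow_of_two_lt (hp : 2 < p) (hα : 0 < α) (hθ0 : ∀ k, θ 0 k = α)
    {t : ℝ} (ht : 0 ≤ t) (i : Fin N) :
    2 * α ^ (2 * p - 2) ≤ (θ t (.inl i) ^ (p - 1)) ^ 2 + (θ t (.inr i) ^ (p - 1)) ^ 2 := by
  have hq : 2 - p < 0 := by linarith
  set β := 2 ^ (2 - p)⁻¹ * α
  have hβ : 0 < β := by positivity
  have hβq : β ^ (2 - p) = 2 * α ^ (2 - p) := by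
    rw [Real.mul_rpow (by positivity) hα.le, Real.rpow_inv_rpow zero_le_two hq.ne]
  have hcons : ∀ T, 0 ≤ T → (∀ s ∈ Icc 0 T, ∀ k, β ≤ θ s k) → ∀ i : Fin N,
      θ T (.inl i) ^ (2 - p) + θ T (.inr i) ^ (2 - p) = β ^ (2 - p) := fun T hT hβT i => by
    rw [hβq, rpow_add_rpow_eq_of_hasDerivWithinAt (a := fun s => θ s (.inl i))
      (b := fun s => θ s (.inr i)) (g := fun s => (Aᵀ *ᵥ lossResidual A y p (θ s)) i)
      (fun s hs => hasDerivWithinAt_inl_of_flow hflow hs i)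
      (fun s hs => hasDerivWithinAt_inr_of_flow hflow hs i)
      (fun s hs => ⟨hβ.trans_le (hβT s hs _), hβ.trans_le (hβT s hs _)⟩) ⟨hT, le_rfl⟩,
      hθ0, hθ0]
    ring
  -- while all coordinates stay `≥ β > 0`, the conserved sum `β ^ (2 - p)` keeps each above `β`
  have hpos : ∀ s, 0 ≤ s → ∀ k, β < θ s k := fun s hs => lt_of_barrier (u := fun t k => θ t k)
    (fun k => (EuclideanSpace.proj (𝕜 := ℝ) k).continuous.comp_continuousOn
      fun s hs => (hflow s hs).continuousWithinAt)
    (fun k => by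
      rw [hθ0]
      exact mul_le_of_le_one_left hα.le
        (Real.rpow_le_one_of_one_le_of_nonpos one_le_two (inv_nonpos.2 hq.le)))
    (fun T hT hβT k => by
      have hθT (k) : 0 < θ T k := hβ.trans_le (hβT T ⟨hT, le_rfl⟩ k)
      rcases k with i | i
      · exact lt_of_rpow_add_rpow_eq hq hβ (hθT _) (hθT _) (hcons T hT hβT i)
      · exact lt_of_rpow_add_rpow_eq hq hβ (hθT _) (hθT (.inl i))
          (by rw [add_comm]; exact hcons T hT hβT i))
    hs
  have hpos' (k) : 0 < θ t k := hβ.trans (hpos t ht k)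
  refine two_mul_rpow_le_of_sq_le_mul (by linarith) hα.le (hpos' _).le (hpos' _).le
    (sq_le_mul_of_rpow_add_rpow_eq hq hα (hpos' _) (hpos' _) ?_)
  rw [hcons t ht (fun s hs k => (hpos s hs.1 k).le) i, hβq]

lemma two_mul_rpow_le_of_flow (hp : 2 ≤ p) (hα : 0 < α) (hθ0 : ∀ k, θ 0 k = α) {t : ℝ}
    (ht : 0 ≤ t) (i : Fin N) :
    2 * α ^ (2 * p - 2) ≤ (θ t (.inl i) ^ (p - 1)) ^ 2 + (θ t (.inr i) ^ (p - 1)) ^ 2 :=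
  hp.eq_or_lt.elim (fun h => two_mul_rpow_le_of_flow_of_eq_two hflow h.symm hθ0 ht i)
    (fun h => two_mul_rpow_le_of_flow_of_two_lt hflow h hα hθ0 ht i)

lemma hasDerivWithinAt_lossFun_of_flow (hp : 1 ≤ p) {t : ℝ} (ht : 0 ≤ t) :
    HasDerivWithinAt (fun s => lossFun A y p (θ s)) (-‖lossGrad A y p (θ t)‖ ^ 2) (Ici 0) t :=
  ((hasGradientAt_lossFun A y p hp (θ t)).hasFDerivAt.comp_hasDerivWithinAt t
    (hflow t ht)).congr_deriv (by simp)

lemma norm2_lossResidual_le_of_flow (hp : 2 ≤ p) (hα : 0 < α) (hθ0 : ∀ k, θ 0 k = α) {t : ℝ}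
    (ht : 0 ≤ t) :
    norm2 (lossResidual A y p (θ t)) ≤
      norm2 y * Real.exp (-(2 * p ^ 2 * sigmaMin A ^ 2 * α ^ (2 * p - 2)) * t) := by
  set C := 2 * p ^ 2 * sigmaMin A ^ 2 * α ^ (2 * p - 2)
  have hdecay := le_mul_exp_of_hasDerivWithinAt_le (c := 2 * C)
    (fun s hs => hasDerivWithinAt_lossFun_of_flow hflow (by linarith) hs) (fun s hs => by
      have := mul_lossFun_le_norm_lossGrad_sq A y p (by positivity) (θ s)
        (two_mul_rpow_le_of_flow hflow hp hα hθ0 hs)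
      linarith) ht
  have hres0 : lossResidual A y p (θ 0) = -y := by
    have hψ0 : psiOf p (θ 0) = 0 := funext fun i => by simp [psiOf, hθ0]
    simp [lossResidual, hψ0]
  simp only [lossFun_eq_norm2_sq, hres0, norm2_neg] at hdecay
  have hexp : Real.exp (-C * t) ^ 2 = Real.exp (-(2 * C) * t) := by
    rw [← Real.exp_nat_mul]
    ring_nf
  rw [← pow_le_pow_iff_left₀ (norm2_nonneg _)
    (mul_nonneg (norm2_nonneg y) (Real.exp_pos _).le) two_ne_zero, mul_pow, hexp]
  linarith

end GradientFlow

theorem stmt6_general (m N : ℕ) (hm : 1 ≤ m)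
    (A : Matrix (Fin m) (Fin N) ℝ) (hA : A.rank = m)
    (y : Fin m → ℝ) (p : ℝ) (hp : 2 ≤ p) (α : ℝ) (hα : 0 < α)
    (θ : ℝ → EuclideanSpace ℝ (Fin N ⊕ Fin N))
    (hθ0 : ∀ i : Fin N ⊕ Fin N, θ 0 i = α)
    (hflow : ∀ t : ℝ, 0 ≤ t →
      HasDerivWithinAt θ (-gradient (lossFun A y p) (θ t)) (Set.Ici 0) t) :
    (∀ t : ℝ, 0 ≤ t →
      norm2 (fun j => A.mulVec (psiOf p (θ t)) j - y j) ≤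
        norm2 y * Real.exp (-(2 * p ^ 2 * sigmaMin A ^ 2 * α ^ (2 * p - 2)) * t)) ∧
    Filter.Tendsto (fun t => A.mulVec (psiOf p (θ t))) Filter.atTop (nhds y) := by
  have hflow' (t : ℝ) (ht : 0 ≤ t) : HasDerivWithinAt θ (-lossGrad A y p (θ t)) (Ici 0) t := by
    rw [← (hasGradientAt_lossFun A y p (by linarith) (θ t)).gradient]
    exact hflow t ht
  have hdecay (t : ℝ) (ht : 0 ≤ t) := norm2_lossResidual_le_of_flow hflow' hp hα hθ0 ht
  refine ⟨hdecay, tendsto_of_norm2_sub_le_exp ?_ hdecay⟩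
  have := sigmaMin_pos A hm hA
  positivity

/-- Proposition `Apsi_to_y`: ‖Aψ_α(t) − y‖₂ ≤ ‖y‖₂ e^{−Ct} with
C = 2p²σ_min(A)²α^{2p−2}; in particular Aψ_α(t) → y as t → ∞. -/
theorem stmt6 (m N : ℕ) (hm : 1 ≤ m) (hmN : m < N)
    (A : Matrix (Fin m) (Fin N) ℝ) (hA : A.rank = m)
    (y : Fin m → ℝ) (p : ℝ) (hp : 2 ≤ p) (α : ℝ) (hα : 0 < α)
    (θ : ℝ → EuclideanSpace ℝ (Fin N ⊕ Fin N))
    (hθ0 : ∀ i : Fin N ⊕ Fin N, θ 0 i = α)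
    (hflow : ∀ t : ℝ, 0 ≤ t →
      HasDerivWithinAt θ (-gradient (lossFun A y p) (θ t)) (Set.Ici 0) t) :
    (∀ t : ℝ, 0 ≤ t →
      norm2 (fun j => A.mulVec (psiOf p (θ t)) j - y j) ≤
        norm2 y * Real.exp (-(2 * p ^ 2 * sigmaMin A ^ 2 * α ^ (2 * p - 2)) * t)) ∧
    Filter.Tendsto (fun t => A.mulVec (psiOf p (θ t))) Filter.atTop (nhds y) :=
  stmt6_general m N hm A hA y p hp α hα θ hθ0 hflow
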